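/- (Energy-optimality of the affine control) Fix real numbers t0 < tf and boundary data p0, v0, pf, vf ∈ ℝ. Consider controls u : [t0, tf] → ℝ that are continuous, together with the associated states v(t) = v0 + ∫_{t0}^{t} u(τ) dτ and p(t) = p0 + ∫_{t0}^{t} v(τ) dτ, and which satisfy the terminal conditions p(tf) = pf and v(tf) = vf. Suppose u*(t) = α·t + c is an affine control that is admissible in this sense (its state reaches (pf, vf) at tf). Then for every admissible continuous control u, (1/2)∫_{t0}^{tf} u*(t)² dt ≤ (1/2)∫_{t0}^{tf} u(t)² dt; that is, the affine control minimizes the energy cost J(u) = (1/2)∫_{t0}^{tf} u(t)² dt among all admissible controls. -/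

import Mathlib

/-!
The terminal conditions on `v` and `p` fix the two moments `∫ u` and `∫ (tf - t) u(t) dt`
(the second one because `p(tf) = p0 + (tf - t0) v0 + ∫ (tf - t) u(t) dt`, by parts), hence
`∫ u* u = ∫ u*²` for the affine `u*`: the difference `u - u*` is orthogonal to `u*` in `L²`,
and `∫ u² = ∫ u*² + ∫ (u - u*)² ≥ ∫ u*²`.
-/

open intervalIntegral Set
open MeasureTheory (volume)

theorem integral_primitive_eq_integral_sub_mul {a b : ℝ} {g : ℝ → ℝ}
    (hg : ContinuousOn g (uIcc a b)) :
    ∫ t in a..b, ∫ τ in a..t, g τ = ∫ t in a..b, (b - t) * g t := by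
  have hG : ∀ x ∈ Ioo (min a b) (max a b), HasDerivAt (fun s ↦ ∫ τ in a..s, g τ) (g x) x := by
    intro x hx
    have hx' : x ∈ uIcc a b := Ioo_subset_Icc_self hx
    exact integral_hasDerivAt_right (hg.mono (uIcc_subset_uIcc_left hx')).intervalIntegrable
      ((hg.mono Ioo_subset_Icc_self).stronglyMeasurableAtFilter isOpen_Ioo x hx)
      (hg.continuousAt (Icc_mem_nhds hx.1 hx.2))
  have h := integral_mul_deriv_eq_deriv_mul_of_hasDerivAt (u := fun t ↦ t - b) (u' := fun _ ↦ 1)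
    (by fun_prop) (continuousOn_primitive_interval hg.integrableOn_uIcc)
    (fun x _ ↦ (hasDerivAt_id x).sub_const b) hG intervalIntegrable_const hg.intervalIntegrable
  simp only [sub_self, zero_mul, integral_same, mul_zero, one_mul, zero_sub] at h
  rw [← neg_neg (∫ t in a..b, ∫ τ in a..t, g τ), ← h, ← integral_neg]
  simp_rw [← neg_mul, neg_sub]

theorem integral_const_add_primitive {a b : ℝ} (x : ℝ) {g : ℝ → ℝ}
    (hg : ContinuousOn g (uIcc a b)) :
    ∫ t in a..b, (x + ∫ τ in a..t, g τ) = (b - a) * x + ∫ t in a..b, (b - t) * g t := by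
  rw [integral_add intervalIntegrable_const
      (continuousOn_primitive_interval hg.integrableOn_uIcc).intervalIntegrable,
    integral_const, smul_eq_mul, integral_primitive_eq_integral_sub_mul hg]

theorem integral_affine_mul {a b : ℝ} (α c : ℝ) {g : ℝ → ℝ}
    (hg : IntervalIntegrable g volume a b) :
    ∫ t in a..b, (α * t + c) * g t =
      (α * b + c) * (∫ t in a..b, g t) - α * ∫ t in a..b, (b - t) * g t := by
  have hmoment : IntervalIntegrable (fun t ↦ (b - t) * g t) volume a b :=
    hg.continuousOn_mul (by fun_prop)
  calc ∫ t in a..b, (α * t + c) * g t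
      = ∫ t in a..b, ((α * b + c) * g t - α * ((b - t) * g t)) := by
        congr 1 with t
        ring
    _ = _ := by
        rw [integral_sub (hg.const_mul _) (hmoment.const_mul _), integral_const_mul,
          integral_const_mul]

theorem integral_sq_le_integral_sq_of_integral_mul_eq {a b : ℝ} (hab : a ≤ b) {f u : ℝ → ℝ}
    (hf : ContinuousOn f (uIcc a b)) (hu : ContinuousOn u (uIcc a b))
    (horth : ∫ t in a..b, f t * u t = ∫ t in a..b, f t ^ 2) :
    ∫ t in a..b, f t ^ 2 ≤ ∫ t in a..b, u t ^ 2 := by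
  have hnonneg : 0 ≤ ∫ t in a..b, (u t - f t) ^ 2 :=
    integral_nonneg hab fun _ _ ↦ sq_nonneg _
  have hexpand : ∫ t in a..b, (u t - f t) ^ 2 =
      (∫ t in a..b, u t ^ 2) - 2 * (∫ t in a..b, f t * u t) + ∫ t in a..b, f t ^ 2 := by
    calc ∫ t in a..b, (u t - f t) ^ 2
        = ∫ t in a..b, (u t ^ 2 - 2 * (f t * u t) + f t ^ 2) := by
          congr 1 with t
          ring
      _ = _ := by
          rw [integral_add, integral_sub, integral_const_mul]
          all_goals exact ContinuousOn.intervalIntegrable (by fun_prop)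
  linarith

open intervalIntegral in
/-- **Energy-optimality of the affine control.** Among all continuous
controls `u` on `[t0, tf]` whose double-integrator state
`v(t) = v0 + ∫_{t0}^{t} u`, `p(t) = p0 + ∫_{t0}^{t} v` reaches the terminal data
`(pf, vf)` at time `tf`, an admissible affine control `u*(t) = α t + c` minimizes the
energy cost `J(u) = (1/2)∫_{t0}^{tf} u(t)² dt`. -/
theorem affine_control_minimizes_energy
    (t0 tf p0 v0 pf vf α c : ℝ) (ht : t0 < tf)
    (hstar_v : v0 + ∫ τ in t0..tf, (α * τ + c) = vf)
    (hstar_p : p0 + (∫ t in t0..tf, (v0 + ∫ τ in t0..t, (α * τ + c))) = pf) :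
    ∀ u : ℝ → ℝ, ContinuousOn u (Set.Icc t0 tf) →
      v0 + (∫ τ in t0..tf, u τ) = vf →
      p0 + (∫ t in t0..tf, (v0 + ∫ τ in t0..t, u τ)) = pf →
      (1 / 2) * (∫ t in t0..tf, (α * t + c) ^ 2) ≤
        (1 / 2) * (∫ t in t0..tf, (u t) ^ 2) := by
  intro u hu huv hup
  have hu' : ContinuousOn u (uIcc t0 tf) := by rwa [uIcc_of_le ht.le]
  have hstar : ContinuousOn (fun t ↦ α * t + c) (uIcc t0 tf) := by fun_prop
  have hmoment₀ : ∫ t in t0..tf, u t = ∫ t in t0..tf, α * t + c := by linarith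
  have hmoment₁ : ∫ t in t0..tf, (tf - t) * u t = ∫ t in t0..tf, (tf - t) * (α * t + c) := by
    rw [integral_const_add_primitive v0 hu'] at hup
    rw [integral_const_add_primitive v0 hstar] at hstar_p
    linarith
  have horth : ∫ t in t0..tf, (α * t + c) * u t = ∫ t in t0..tf, (α * t + c) ^ 2 := by
    simp_rw [pow_two, integral_affine_mul α c hu'.intervalIntegrable,
      integral_affine_mul α c hstar.intervalIntegrable, hmoment₀, hmoment₁]
  have henergy := integral_sq_le_integral_sq_of_integral_mul_eq ht.le hstar hu' horth
  linarith
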